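/- Let X be a mean-zero Gaussian random vector in ℝᵖ with positive definite covariance matrix Σ, let ε be a mean-zero, square-integrable real random variable independent of X, and suppose Y = Xᵀβ* + ε for some fixed β* ∈ ℝᵖ. Fix j ∈ {1,…,p} and write X_{-j} for X with its j-th coordinate deleted and β*_{-j} for β* with its j-th coordinate deleted. Then the dropout variable-importance estimate VI_dr(j) = E[(Y − X_{-j}ᵀβ*_{-j})²] − E[(Y − Xᵀβ*)²] equals (β*_j)² · Σ_{jj}. -/

import Mathlib

open MeasureTheory Matrix ProbabilityTheory Real
open scoped NNReal ENNReal

lemma aux_integrable_sq_exp {b : ℝ} (hb : 0 < b) :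
    Integrable (fun x : ℝ => x ^ 2 * Real.exp (-b * x ^ 2)) := by
  have h := integrable_rpow_mul_exp_neg_mul_sq hb (s := 2) (by norm_num)
  simpa [Real.rpow_two] using h

lemma aux_integral_mul_exp {b : ℝ} (hb : 0 < b) :
    ∫ x : ℝ, x * Real.exp (-b * x ^ 2) = 0 := by
  have hderiv : ∀ x : ℝ, HasDerivAt (fun x : ℝ => -(2 * b)⁻¹ * Real.exp (-b * x ^ 2))
      (x * Real.exp (-b * x ^ 2)) x := by
    intro x
    have h1 : HasDerivAt (fun x : ℝ => -b * x ^ 2) (-b * (2 * x)) x := by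
      simpa using ((hasDerivAt_pow 2 x).const_mul (-b))
    have h2 := (h1.exp).const_mul (-(2 * b)⁻¹)
    refine h2.congr_deriv ?_
    have hb' : b ≠ 0 := hb.ne'
    field_simp
  exact integral_eq_zero_of_hasDerivAt_of_integrable hderiv
    (integrable_mul_exp_neg_mul_sq hb)
    ((integrable_exp_neg_mul_sq hb).const_mul _)

lemma aux_integral_sq_exp {b : ℝ} (hb : 0 < b) :
    ∫ x : ℝ, x ^ 2 * Real.exp (-b * x ^ 2) = Real.sqrt (π / b) / (2 * b) := by
  have hderiv : ∀ x : ℝ, HasDerivAt (fun x : ℝ => x * Real.exp (-b * x ^ 2))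
      (Real.exp (-b * x ^ 2) - 2 * b * (x ^ 2 * Real.exp (-b * x ^ 2))) x := by
    intro x
    have h1 : HasDerivAt (fun x : ℝ => -b * x ^ 2) (-b * (2 * x)) x := by
      simpa using ((hasDerivAt_pow 2 x).const_mul (-b))
    have h2 := (hasDerivAt_id x).mul h1.exp
    refine h2.congr_deriv ?_
    simp only [id_eq]
    ring
  have hint : Integrable (fun x : ℝ =>
      Real.exp (-b * x ^ 2) - 2 * b * (x ^ 2 * Real.exp (-b * x ^ 2))) :=
    (integrable_exp_neg_mul_sq hb).sub ((aux_integrable_sq_exp hb).const_mul _)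
  have h0 := integral_eq_zero_of_hasDerivAt_of_integrable hderiv hint
    (integrable_mul_exp_neg_mul_sq hb)
  rw [integral_sub (integrable_exp_neg_mul_sq hb) ((aux_integrable_sq_exp hb).const_mul _),
    integral_const_mul, integral_gaussian] at h0
  have hb' : (2 : ℝ) * b ≠ 0 := by positivity
  field_simp at h0 ⊢
  linarith

lemma aux_pdf_eq (v : ℝ≥0) (hv : v ≠ 0) (x : ℝ) :
    gaussianPDFReal 0 v x
      = (Real.sqrt (2 * π * v))⁻¹ * Real.exp (-(2 * (v : ℝ))⁻¹ * x ^ 2) := by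
  have hv' : (v : ℝ) ≠ 0 := by exact_mod_cast hv
  rw [gaussianPDFReal, sub_zero]
  congr 2
  rw [neg_div, neg_mul, inv_mul_eq_div]

lemma aux_integrable_sq_gaussianReal (v : ℝ≥0) (hv : v ≠ 0) :
    Integrable (fun x : ℝ => x ^ 2) (gaussianReal 0 v) := by
  have hvpos : (0 : ℝ) < v := lt_of_le_of_ne v.2 (by exact_mod_cast hv.symm)
  have hb : (0 : ℝ) < (2 * (v : ℝ))⁻¹ := by positivity
  rw [gaussianReal_of_var_ne_zero 0 hv,
    integrable_withDensity_iff (measurable_gaussianPDF 0 v)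
      (Filter.Eventually.of_forall fun x => ENNReal.ofReal_lt_top)]
  have heq : (fun x : ℝ => x ^ 2 * (gaussianPDF 0 v x).toReal)
      = fun x : ℝ => (Real.sqrt (2 * π * v))⁻¹ *
        (x ^ 2 * Real.exp (-(2 * (v : ℝ))⁻¹ * x ^ 2)) := by
    funext x
    rw [gaussianPDF, ENNReal.toReal_ofReal (gaussianPDFReal_nonneg 0 v x), aux_pdf_eq v hv]
    ring
  rw [heq]
  exact (aux_integrable_sq_exp hb).const_mul _

lemma aux_key (v : ℝ≥0) (hv : v ≠ 0) (g : ℝ → ℝ) :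
    ∫ x, g x ∂(gaussianReal 0 v)
      = ∫ x, (Real.sqrt (2 * π * v))⁻¹ * (g x * Real.exp (-(2 * (v : ℝ))⁻¹ * x ^ 2)) := by
  rw [gaussianReal_of_var_ne_zero 0 hv]
  have : gaussianPDF 0 v
      = fun x => ((Real.toNNReal (gaussianPDFReal 0 v x) : ℝ≥0) : ℝ≥0∞) := rfl
  rw [this, integral_withDensity_eq_integral_smul
      ((measurable_gaussianPDFReal 0 v).real_toNNReal) g]
  congr 1
  funext x
  rw [NNReal.smul_def, Real.coe_toNNReal _ (gaussianPDFReal_nonneg 0 v x), smul_eq_mul,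
    aux_pdf_eq v hv]
  ring

lemma aux_integral_id_gaussianReal (v : ℝ≥0) (hv : v ≠ 0) :
    ∫ x, x ∂(gaussianReal 0 v) = 0 := by
  have hvpos : (0 : ℝ) < v := lt_of_le_of_ne v.2 (by exact_mod_cast hv.symm)
  have hb : (0 : ℝ) < (2 * (v : ℝ))⁻¹ := by positivity
  rw [aux_key v hv (fun x => x), integral_const_mul, aux_integral_mul_exp hb, mul_zero]

lemma aux_integral_sq_gaussianReal (v : ℝ≥0) (hv : v ≠ 0) :
    ∫ x, x ^ 2 ∂(gaussianReal 0 v) = v := by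
  have hvpos : (0 : ℝ) < v := lt_of_le_of_ne v.2 (by exact_mod_cast hv.symm)
  set b : ℝ := (2 * (v : ℝ))⁻¹ with hbdef
  have hb : (0 : ℝ) < b := by positivity
  rw [aux_key v hv (fun x => x ^ 2), integral_const_mul, aux_integral_sq_exp hb]
  have h1 : π / b = 2 * π * v := by
    rw [hbdef]
    field_simp
  rw [h1]
  have h2 : Real.sqrt (2 * π * v) ≠ 0 := by positivity
  rw [hbdef]
  field_simp

/-- Under a linear model `Y = Xᵀβ* + ε` with `X` mean-zero Gaussian with
positive definite covariance `Σ` and `ε` mean-zero, square-integrable and independent of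
`X`, the dropout variable-importance estimate for variable `j` equals `(β*ⱼ)²Σⱼⱼ`. -/
theorem dropout_vi_linear_model {Ωs : Type*} [MeasurableSpace Ωs] (μ : Measure Ωs)
    [IsProbabilityMeasure μ] {p : ℕ}
    (X : Ωs → Fin p → ℝ) (hXmeas : Measurable X)
    (Sig : Matrix (Fin p) (Fin p) ℝ) (hSigpd : Sig.PosDef)
    (hgauss : ∀ a : Fin p → ℝ,
      Measure.map (fun ω => a ⬝ᵥ X ω) μ = gaussianReal 0 (a ⬝ᵥ (Sig *ᵥ a)).toNNReal)
    (ε : Ωs → ℝ) (hεmeas : Measurable ε) (hε2 : MemLp ε 2 μ)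
    (hεmean : ∫ ω, ε ω ∂μ = 0)
    (hindep : IndepFun X ε μ)
    (βstar : Fin p → ℝ)
    (Y : Ωs → ℝ) (hY : Y = fun ω => X ω ⬝ᵥ βstar + ε ω)
    (j : Fin p)
    (VIdr : ℝ)
    (hVIdr : VIdr =
      (∫ ω, (Y ω - ∑ i : {i : Fin p // i ≠ j}, X ω i.val * βstar i.val) ^ 2 ∂μ)
        - ∫ ω, (Y ω - X ω ⬝ᵥ βstar) ^ 2 ∂μ) :
    VIdr = βstar j ^ 2 * Sig j j := by
  classical
  set f : Ωs → ℝ := fun ω => X ω j with hfdef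
  have hfmeas : Measurable f := (measurable_pi_apply j).comp hXmeas
  -- positivity of Σⱼⱼ
  have hjj : 0 < Sig j j := by
    have h := hSigpd.dotProduct_mulVec_pos (x := Pi.single j 1) (by
      intro h
      have := congrFun h j
      simp at this)
    simpa [single_dotProduct, mulVec_single] using h
  set v : ℝ≥0 := (Sig j j).toNNReal with hvdef
  have hv : v ≠ 0 := by
    simp only [hvdef, ne_eq, Real.toNNReal_eq_zero, not_le]
    exact hjj
  -- law of f
  have hmap : Measure.map f μ = gaussianReal 0 v := by
    have h := hgauss (Pi.single j 1)
    simpa [hfdef, hvdef, single_dotProduct, mulVec_single] using h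
  -- moments of f
  have hfsq_int : Integrable (fun ω => f ω ^ 2) μ := by
    have h := (integrable_map_measure
        (by fun_prop : AEStronglyMeasurable (fun x : ℝ => x ^ 2) (Measure.map f μ))
        hfmeas.aemeasurable).mp (by rw [hmap]; exact aux_integrable_sq_gaussianReal v hv)
    exact h
  have hf2 : MemLp f 2 μ :=
    (memLp_two_iff_integrable_sq hfmeas.aestronglyMeasurable).2 hfsq_int
  have hfmean : ∫ ω, f ω ∂μ = 0 := by
    have h := integral_map hfmeas.aemeasurable
      (aestronglyMeasurable_id (μ := Measure.map f μ))
    rw [hmap] at h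
    simpa [aux_integral_id_gaussianReal v hv] using h.symm
  have hfsq : ∫ ω, f ω ^ 2 ∂μ = Sig j j := by
    have h := integral_map hfmeas.aemeasurable
      (by fun_prop : AEStronglyMeasurable (fun x : ℝ => x ^ 2) (Measure.map f μ))
    rw [hmap, aux_integral_sq_gaussianReal v hv] at h
    rw [← h, hvdef, Real.coe_toNNReal _ hjj.le]
  -- independence
  have hindf : IndepFun f ε μ := hindep.comp (measurable_pi_apply j) measurable_id
  have hfε_int : Integrable (fun ω => f ω * ε ω) μ :=
    hindf.integrable_mul (hf2.integrable one_le_two) (hε2.integrable one_le_two)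
  have hfε : ∫ ω, f ω * ε ω ∂μ = 0 := by
    have h := hindf.integral_mul_eq_mul_integral hf2.aestronglyMeasurable hε2.aestronglyMeasurable
    calc ∫ ω, f ω * ε ω ∂μ = ∫ ω, (f * ε) ω ∂μ := rfl
    _ = (∫ ω, f ω ∂μ) * ∫ ω, ε ω ∂μ := h
    _ = 0 := by rw [hfmean, zero_mul]
  -- rewrite integrands
  have hsum : ∀ ω, (∑ i : {i : Fin p // i ≠ j}, X ω i.val * βstar i.val)
      = X ω ⬝ᵥ βstar - X ω j * βstar j := by
    intro ω
    rw [← Finset.sum_subtype (Finset.univ.erase j)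
        (fun x => by simp [Finset.mem_erase]) (fun i => X ω i * βstar i),
      Finset.sum_erase_eq_sub (Finset.mem_univ j), dotProduct]
  have h1 : ∀ ω, Y ω - (∑ i : {i : Fin p // i ≠ j}, X ω i.val * βstar i.val)
      = βstar j * f ω + ε ω := by
    intro ω
    rw [hY, hsum ω]
    simp [hfdef]
    ring
  have h2 : ∀ ω, Y ω - X ω ⬝ᵥ βstar = ε ω := by
    intro ω
    rw [hY]
    ring
  have hεsq_int : Integrable (fun ω => ε ω ^ 2) μ := hε2.integrable_sq
  have hexp : (fun ω => (βstar j * f ω + ε ω) ^ 2)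
      = fun ω => (βstar j ^ 2 * f ω ^ 2 + 2 * βstar j * (f ω * ε ω)) + ε ω ^ 2 := by
    funext ω
    ring
  have hadd : Integrable (fun ω => βstar j ^ 2 * f ω ^ 2 + 2 * βstar j * (f ω * ε ω)) μ := by
    exact (hfsq_int.const_mul _).add (hfε_int.const_mul _)
  have hI1 : ∫ ω, (βstar j * f ω + ε ω) ^ 2 ∂μ
      = βstar j ^ 2 * Sig j j + ∫ ω, ε ω ^ 2 ∂μ := by
    rw [hexp, integral_add hadd hεsq_int,
      integral_add (hfsq_int.const_mul _) (hfε_int.const_mul _),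
      integral_const_mul, integral_const_mul, hfsq, hfε, mul_zero, add_zero]
  rw [hVIdr]
  simp_rw [h1, h2]
  rw [hI1]
  ring
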